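/- For a duplicial module M, the Connes operator squares to zero: B_{n+1} B_n = 0, where B_n = Σ_{i=0}^n d_n κ_n^i. -/
import Mathlib


open CategoryTheory

universe v u

/-- A duplicial module in a pre-additive category `C`: objects `M n` together with
face maps `δ n i : M (n+1) ⟶ M n` (representing `∂_{n+1,i}`, meaningful for `0 ≤ i ≤ n+1`)
and degeneracy maps `σ n i : M n ⟶ M (n+1)` (representing `s_{n,i}`, meaningful for
`0 ≤ i ≤ n+1`, so including the extra degeneracy `s_{n,n+1}`), satisfying the standard
simplicial identities extended to include the extra degeneracy; the composite
`∂_{n+1,0} s_{n,n+1}` is the duplicial operator `t_n`.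
Here `f ≫ g` denotes "first apply `f`, then `g`". -/
structure DupMod (C : Type u) [Category.{v} C] [Preadditive C] where
  M : ℕ → C
  δ : ∀ n : ℕ, ℕ → (M (n + 1) ⟶ M n)
  σ : ∀ n : ℕ, ℕ → (M n ⟶ M (n + 1))
  /-- `∂_{n+1,k} ∂_{n+2,j} = ∂_{n+1,j} ∂_{n+2,k+1}` for `j ≤ k ≤ n+1`. -/
  δδ : ∀ n j k, j ≤ k → k ≤ n + 1 →
    δ (n + 1) j ≫ δ n k = δ (n + 1) (k + 1) ≫ δ n j
  /-- `∂_{n+2,j} s_{n+1,k+1} = s_{n,k} ∂_{n+1,j}` for `1 ≤ (k+1)-j ≤ n+1`,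
  i.e. `j ≤ k ≤ n+j`, with `k ≤ n+1`. -/
  δσ_lt : ∀ n j k, j ≤ k → k ≤ n + j → k ≤ n + 1 →
    σ (n + 1) (k + 1) ≫ δ (n + 1) j = δ n j ≫ σ n k
  /-- `∂_{n+1,j} s_{n,j} = 1` for `j ≤ n+1`. -/
  δσ_self : ∀ n j, j ≤ n + 1 → σ n j ≫ δ n j = 𝟙 (M n)
  /-- `∂_{n+1,j+1} s_{n,j} = 1` for `j ≤ n`. -/
  δσ_succ : ∀ n j, j ≤ n → σ n j ≫ δ n (j + 1) = 𝟙 (M n)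
  /-- `∂_{n+2,j+1} s_{n+1,k} = s_{n,k} ∂_{n+1,j}` for `k < j ≤ n+1`. -/
  δσ_gt : ∀ n j k, k < j → j ≤ n + 1 →
    σ (n + 1) k ≫ δ (n + 1) (j + 1) = δ n j ≫ σ n k
  /-- `s_{n+1,j} s_{n,k} = s_{n+1,k+1} s_{n,j}` for `j ≤ k ≤ n+1`. -/
  σσ : ∀ n j k, j ≤ k → k ≤ n + 1 →
    σ n k ≫ σ (n + 1) j = σ n j ≫ σ (n + 1) (k + 1)

/-- Iterated composition: `cpow f m = f ≫ f ≫ ⋯ ≫ f` (`m` factors), i.e. `f^m`. -/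
def cpow {C : Type u} [Category.{v} C] {A : C} (f : A ⟶ A) : ℕ → (A ⟶ A)
  | 0 => 𝟙 A
  | m + 1 => f ≫ cpow f m

namespace DupMod

variable {C : Type u} [Category.{v} C] [Preadditive C] (X : DupMod C)

/-- The simplicial differential `b_{n+1} = ∑_{i=0}^{n+1} (-1)^i ∂_{n+1,i} : M_{n+1} → M_n`. -/
def b (n : ℕ) : X.M (n + 1) ⟶ X.M n :=
  ∑ i ∈ Finset.range (n + 2), ((-1 : ℤ) ^ i) • X.δ n i

/-- The Dwyer–Kan differential `d_n = ∑_{i=0}^{n+1} (-1)^i s_{n,i} : M_n → M_{n+1}`. -/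
def d (n : ℕ) : X.M n ⟶ X.M (n + 1) :=
  ∑ i ∈ Finset.range (n + 2), ((-1 : ℤ) ^ i) • X.σ n i

/-- The duplicial operator `t_n = ∂_{n+1,0} s_{n,n+1} : M_n → M_n`. -/
def t (n : ℕ) : X.M n ⟶ X.M n := X.σ n (n + 1) ≫ X.δ n 0

/-- The Karoubi operator `κ_n = (-1)^n (∂_{n+1,0} s_{n,n+1} - s_{n-1,n} ∂_{n,0}) : M_n → M_n`
(for `n = 0` the second term is absent). -/
def κ : ∀ n : ℕ, X.M n ⟶ X.M n
  | 0 => X.σ 0 1 ≫ X.δ 0 0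
  | n + 1 => ((-1 : ℤ) ^ (n + 1)) •
      (X.σ (n + 1) (n + 2) ≫ X.δ (n + 1) 0 - X.δ n 0 ≫ X.σ n (n + 1))

end DupMod

/-- The Connes operator `B_n = ∑_{i=0}^n d_n κ_n^i : M_n → M_{n+1}`. -/
def DupMod.Bop {C : Type u} [Category.{v} C] [Preadditive C] (X : DupMod C) (n : ℕ) :
    X.M n ⟶ X.M (n + 1) :=
  ∑ i ∈ Finset.range (n + 1), cpow (X.κ n) i ≫ X.d n



section
variable {C : Type u} [Category.{v} C] [Preadditive C] (X : DupMod C)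

lemma d_comp_d (n : ℕ) : X.d n ≫ X.d (n + 1) = 0 := by
  dsimp [DupMod.d]
  rw [Preadditive.sum_comp]
  simp only [Preadditive.comp_sum, Preadditive.zsmul_comp, Preadditive.comp_zsmul, smul_smul,
    ← pow_add]
  rw [← Finset.sum_product']
  rw [← Finset.sum_filter_add_sum_filter_not (Finset.range (n + 2) ×ˢ Finset.range (n + 3))
    (fun p => p.2 ≤ p.1)]
  have key : ∑ p ∈ (Finset.range (n + 2) ×ˢ Finset.range (n + 3)).filter (fun p => ¬ p.2 ≤ p.1),
      ((-1 : ℤ) ^ (p.2 + p.1)) • (X.σ n p.1 ≫ X.σ (n + 1) p.2)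
      = ∑ p ∈ (Finset.range (n + 2) ×ˢ Finset.range (n + 3)).filter (fun p => p.2 ≤ p.1),
      (-(((-1 : ℤ) ^ (p.2 + p.1)) • (X.σ n p.1 ≫ X.σ (n + 1) p.2))) := by
    apply Finset.sum_nbij' (i := fun p => (p.2 - 1, p.1)) (j := fun p => (p.2, p.1 + 1))
    · rintro ⟨a, b⟩ hp
      simp only [Finset.mem_filter, Finset.mem_product, Finset.mem_range] at hp ⊢
      omega
    · rintro ⟨a, b⟩ hp
      simp only [Finset.mem_filter, Finset.mem_product, Finset.mem_range] at hp ⊢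
      omega
    · rintro ⟨a, b⟩ hp
      simp only [Finset.mem_filter, Finset.mem_product, Finset.mem_range] at hp
      dsimp only
      simp only [Prod.mk.injEq, true_and, and_true]
      omega
    · rintro ⟨a, b⟩ hp
      simp only [Finset.mem_filter, Finset.mem_product, Finset.mem_range] at hp
      dsimp only
      simp only [Prod.mk.injEq, true_and, and_true]
      omega
    · rintro ⟨a, b⟩ hp
      simp only [Finset.mem_filter, Finset.mem_product, Finset.mem_range] at hp
      obtain ⟨⟨h1, h2⟩, h3⟩ := hp
      have hσ : X.σ n (b - 1) ≫ X.σ (n + 1) a = X.σ n a ≫ X.σ (n + 1) b := by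
        have := X.σσ n a (b - 1) (by omega) (by omega)
        rwa [show b - 1 + 1 = b by omega] at this
      simp only
      rw [hσ]
      have hsign : ((-1 : ℤ) ^ (b + a)) = -((-1 : ℤ) ^ (a + (b - 1))) := by
        rw [show b + a = (a + (b - 1)) + 1 by omega, pow_succ]
        ring
      rw [hsign, neg_smul]
  rw [key, ← Finset.sum_add_distrib]
  simp

lemma d_comp_t (n : ℕ) :
    X.d n ≫ (X.σ (n + 1) (n + 2) ≫ X.δ (n + 1) 0)
      = X.σ n (n + 1) + ((-1 : ℤ) ^ (n + 1)) • (X.t n ≫ X.σ n (n + 1))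
      - X.t n ≫ X.d n := by
  dsimp [DupMod.d, DupMod.t]
  rw [Preadditive.sum_comp]
  have h1 : ∀ i ∈ Finset.range (n + 2),
      (((-1 : ℤ) ^ i) • X.σ n i) ≫ (X.σ (n + 1) (n + 2) ≫ X.δ (n + 1) 0)
      = ((-1 : ℤ) ^ i) • (X.σ n (n + 1) ≫ (X.σ (n + 1) i ≫ X.δ (n + 1) 0)) := by
    intro i hi
    simp only [Finset.mem_range] at hi
    rw [Preadditive.zsmul_comp, ← Category.assoc,
      ← X.σσ n i (n + 1) (by omega) (by omega), Category.assoc]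
  rw [Finset.sum_congr rfl h1, Finset.sum_range_succ']
  have h2 : ∀ i ∈ Finset.range (n + 1),
      ((-1 : ℤ) ^ (i + 1)) • (X.σ n (n + 1) ≫ (X.σ (n + 1) (i + 1) ≫ X.δ (n + 1) 0))
      = -(((-1 : ℤ) ^ i) • ((X.σ n (n + 1) ≫ X.δ n 0) ≫ X.σ n i)) := by
    intro i hi
    simp only [Finset.mem_range] at hi
    rw [X.δσ_lt n 0 i (by omega) (by omega) (by omega), pow_succ]
    simp only [mul_neg_one, neg_smul, Category.assoc]
  rw [Finset.sum_congr rfl h2, X.δσ_self (n + 1) 0 (by omega), Finset.sum_neg_distrib]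
  conv_rhs => rw [Preadditive.comp_sum, Finset.sum_range_succ]
  simp only [Preadditive.comp_zsmul, pow_zero, one_smul, Category.comp_id, Category.assoc]
  abel

lemma d_comp_δ0 (n : ℕ) :
    X.d (n + 1) ≫ X.δ (n + 1) 0 = 𝟙 (X.M (n + 1)) - X.δ n 0 ≫ X.d n
      + ((-1 : ℤ) ^ (n + 1)) • (X.δ n 0 ≫ X.σ n (n + 1))
      + ((-1 : ℤ) ^ (n + 2)) • (X.σ (n + 1) (n + 2) ≫ X.δ (n + 1) 0) := by
  dsimp [DupMod.d]
  rw [Preadditive.sum_comp, Finset.sum_range_succ, Finset.sum_range_succ']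
  have h2 : ∀ i ∈ Finset.range (n + 1),
      (((-1 : ℤ) ^ (i + 1)) • X.σ (n + 1) (i + 1)) ≫ X.δ (n + 1) 0
      = -(((-1 : ℤ) ^ i) • (X.δ n 0 ≫ X.σ n i)) := by
    intro i hi
    simp only [Finset.mem_range] at hi
    rw [Preadditive.zsmul_comp, X.δσ_lt n 0 i (by omega) (by omega) (by omega), pow_succ]
    simp only [mul_neg_one, neg_smul]
  rw [Finset.sum_congr rfl h2, Finset.sum_neg_distrib]
  rw [Preadditive.zsmul_comp, Preadditive.zsmul_comp, X.δσ_self (n + 1) 0 (by omega)]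
  conv_rhs => rw [Preadditive.comp_sum, Finset.sum_range_succ]
  simp only [Preadditive.comp_zsmul, pow_zero, one_smul]
  abel

lemma d_comp_σtop (n : ℕ) :
    X.d n ≫ X.σ (n + 1) (n + 2) = X.σ n (n + 1) ≫ X.d (n + 1)
      - ((-1 : ℤ) ^ (n + 2)) • (X.σ n (n + 1) ≫ X.σ (n + 1) (n + 2)) := by
  dsimp [DupMod.d]
  rw [Preadditive.sum_comp]
  have h1 : ∀ i ∈ Finset.range (n + 2),
      (((-1 : ℤ) ^ i) • X.σ n i) ≫ X.σ (n + 1) (n + 2)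
      = ((-1 : ℤ) ^ i) • (X.σ n (n + 1) ≫ X.σ (n + 1) i) := by
    intro i hi
    simp only [Finset.mem_range] at hi
    rw [Preadditive.zsmul_comp, ← X.σσ n i (n + 1) (by omega) (by omega)]
  rw [Finset.sum_congr rfl h1]
  conv_rhs => rw [Preadditive.comp_sum, Finset.sum_range_succ]
  simp only [Preadditive.comp_zsmul,
    show ((-1 : ℤ)) ^ (n + 1 + 1) = (-1 : ℤ) ^ (n + 2) from rfl,
    show X.σ (n + 1) (n + 1 + 1) = X.σ (n + 1) (n + 2) from rfl]
  abel

lemma d_comp_κ (n : ℕ) : X.d n ≫ X.κ (n + 1) = X.κ n ≫ X.d n := by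
  cases n with
  | zero =>
    have hA := d_comp_t X 0
    have hδ : X.d 0 ≫ X.δ 0 0 = 𝟙 (X.M 0) - X.σ 0 1 ≫ X.δ 0 0 := by
      dsimp [DupMod.d]
      rw [Preadditive.sum_comp, Finset.sum_range_succ, Finset.sum_range_succ,
        Finset.sum_range_zero]
      rw [Preadditive.zsmul_comp, Preadditive.zsmul_comp, X.δσ_self 0 0 (by omega)]
      simp
      abel
    dsimp only [DupMod.κ]
    dsimp only [DupMod.t] at hA
    simp only [show X.σ (0 + 1) (0 + 2) = X.σ 1 2 from rfl, show X.δ (0 + 1) 0 = X.δ 1 0 from rfl,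
      show X.σ 0 (0 + 1) = X.σ 0 1 from rfl,
      show ((-1 : ℤ)) ^ (0 + 1) = -1 by norm_num] at hA ⊢
    rw [Preadditive.comp_zsmul, Preadditive.comp_sub,
      ← Category.assoc (X.d 0) (X.δ 0 0) (X.σ 0 1), hA, hδ]
    simp only [neg_smul, one_smul, Preadditive.sub_comp, Preadditive.add_comp,
      Category.id_comp, Category.assoc, neg_sub, smul_sub]
    abel
  | succ m =>
    have hA := d_comp_t X (m + 1)
    have hB := d_comp_δ0 X m
    have hC := d_comp_σtop X m
    have e2 : ((-1 : ℤ) ^ (m + 2)) = -((-1 : ℤ) ^ (m + 1)) := by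
      rw [pow_succ]; ring
    dsimp only [DupMod.κ]
    dsimp only [DupMod.t] at hA
    simp only [show X.σ (m + 1 + 1) (m + 1 + 2) = X.σ (m + 2) (m + 3) from rfl,
      show X.δ (m + 1 + 1) 0 = X.δ (m + 2) 0 from rfl,
      show X.σ (m + 1) (m + 1 + 1) = X.σ (m + 1) (m + 2) from rfl,
      show ((-1 : ℤ)) ^ (m + 1 + 1) = (-1 : ℤ) ^ (m + 2) from rfl,
      show ((-1 : ℤ)) ^ (m + 1 + 2) = (-1 : ℤ) ^ (m + 3) from rfl] at hA ⊢
    rw [Preadditive.comp_zsmul, Preadditive.zsmul_comp, Preadditive.comp_sub,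
      Preadditive.sub_comp,
      ← Category.assoc (X.d (m + 1)) (X.δ (m + 1) 0) (X.σ (m + 1) (m + 2)), hA, hB]
    simp only [Preadditive.sub_comp, Preadditive.add_comp, Preadditive.zsmul_comp,
      Category.id_comp, Category.assoc]
    rw [hC]
    simp only [e2, neg_smul, smul_sub, Preadditive.comp_sub, Preadditive.sub_comp,
      Preadditive.comp_zsmul, Preadditive.zsmul_comp, Category.assoc, smul_neg, neg_neg, neg_sub, Preadditive.comp_neg, Preadditive.neg_comp]
    module

lemma d_comp_cpow (n j : ℕ) :
    X.d n ≫ cpow (X.κ (n + 1)) j = cpow (X.κ n) j ≫ X.d n := by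
  induction j with
  | zero => simp [cpow]
  | succ k ih =>
    show X.d n ≫ (X.κ (n + 1) ≫ cpow (X.κ (n + 1)) k) = (X.κ n ≫ cpow (X.κ n) k) ≫ X.d n
    rw [← Category.assoc, d_comp_κ, Category.assoc, ih, Category.assoc]

end

/-- For a duplicial module `M`, the Connes operator squares to zero:
`B_{n+1} B_n = 0`. -/
theorem connes_squared_zero {C : Type u} [Category.{v} C] [Preadditive C]
    (X : DupMod C) (n : ℕ) :
    X.Bop n ≫ X.Bop (n + 1) = 0 := by
  dsimp [DupMod.Bop]
  rw [Preadditive.sum_comp]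
  apply Finset.sum_eq_zero
  intro i _
  rw [Preadditive.comp_sum]
  apply Finset.sum_eq_zero
  intro j _
  rw [Category.assoc, ← Category.assoc (X.d n), d_comp_cpow, Category.assoc,
    d_comp_d, Limits.comp_zero, Limits.comp_zero]
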